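/- arXiv:2405.12761 — 2 statements merged into one kernel-verified Lean document; each statement's English description precedes it below -/
import Mathlib

section
/- Let $p_S = 1+\sqrt 2$. There exists a constant $C>0$ such that for all $t \ge 0$ and $r > 0$ with $t + r \ge 1$: if $r \le t/2$ then $\frac{1}{r}\int_{t-r}^{t+r}\langle\beta\rangle^{1-p_S}\,d\beta \le C\,\langle t+r\rangle^{-1}\langle t-r\rangle^{2-p_S}$, and if $r \ge t/2$ then $\frac{1}{r}\int_{|t-r|}^{t+r}\langle\beta\rangle^{1-p_S}\,d\beta \le C\,\langle t+r\rangle^{-1}\langle t-r\rangle^{2-p_S}$, where $\langle y\rangle = (1+y^2)^{1/2}$. -/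
/-- `⟨y⟩ = (1+y²)^{1/2}`. -/
noncomputable def jap (y : ℝ) : ℝ := Real.sqrt (1 + y ^ 2)

lemma jap_pos (y : ℝ) : 0 < jap y := Real.sqrt_pos.2 (by positivity)

lemma one_le_jap (y : ℝ) : 1 ≤ jap y :=
  Real.one_le_sqrt.2 (by nlinarith [sq_nonneg y])

lemma jap_mono {x y : ℝ} (hx : 0 ≤ x) (h : x ≤ y) : jap x ≤ jap y :=
  Real.sqrt_le_sqrt (by nlinarith)

lemma le_jap (y : ℝ) : |y| ≤ jap y := by
  rw [← Real.sqrt_sq_eq_abs]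
  exact Real.sqrt_le_sqrt (by nlinarith)

lemma jap_abs (y : ℝ) : jap |y| = jap y := by simp [jap, sq_abs]

lemma jap_le_sqrt_two_mul {y : ℝ} (hy : 1 ≤ y) : jap y ≤ Real.sqrt 2 * y := by
  rw [jap, show Real.sqrt 2 * y = Real.sqrt (2 * y ^ 2) by
    rw [Real.sqrt_mul (by norm_num), Real.sqrt_sq (by linarith)]]
  exact Real.sqrt_le_sqrt (by nlinarith)

lemma jap_rpow_cont (c : ℝ) : Continuous fun β : ℝ => jap β ^ c := by
  have h : Continuous jap := (continuous_const.add (continuous_pow 2)).sqrt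
  exact h.rpow_const fun x => Or.inl (jap_pos x).ne'

set_option maxHeartbeats 1000000 in
/-- Kernel estimate for the global existence proof: with `p_S = 1+√2` there is a
constant `C > 0` such that for `t ≥ 0`, `r > 0`, `t + r ≥ 1`:
if `r ≤ t/2` then `(1/r)∫_{t-r}^{t+r} ⟨β⟩^{1-p_S} dβ ≤ C ⟨t+r⟩⁻¹ ⟨t-r⟩^{2-p_S}`,
and if `r ≥ t/2` then `(1/r)∫_{|t-r|}^{t+r} ⟨β⟩^{1-p_S} dβ ≤ C ⟨t+r⟩⁻¹ ⟨t-r⟩^{2-p_S}`. -/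
theorem kernel_estimate (pS : ℝ) (hpS : pS = 1 + Real.sqrt 2) :
    ∃ C > (0 : ℝ), ∀ t r : ℝ, 0 ≤ t → 0 < r → 1 ≤ t + r →
      (r ≤ t / 2 →
        (1 / r) * ∫ β in (t - r)..(t + r), (jap β) ^ (1 - pS)
          ≤ C * (jap (t + r))⁻¹ * (jap (t - r)) ^ (2 - pS)) ∧
      (t / 2 ≤ r →
        (1 / r) * ∫ β in |t - r|..(t + r), (jap β) ^ (1 - pS)
          ≤ C * (jap (t + r))⁻¹ * (jap (t - r)) ^ (2 - pS)) := by
  have hs0 : (0:ℝ) ≤ Real.sqrt 2 := Real.sqrt_nonneg 2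
  have hsq : Real.sqrt 2 ^ 2 = 2 := Real.sq_sqrt (by norm_num)
  have hs1 : (7:ℝ)/5 < Real.sqrt 2 := by nlinarith
  have hs2 : Real.sqrt 2 < (3:ℝ)/2 := by nlinarith
  set s : ℝ := Real.sqrt 2 with hsdef
  have h1p : 1 - pS = -s := by rw [hpS]; ring
  have h2p : 2 - pS = 1 - s := by rw [hpS]; ring
  have hsneg : -s ≤ 0 := by linarith
  refine ⟨100, by norm_num, fun t r ht hr htr => ?_⟩
  constructor
  · -- Case r ≤ t/2
    intro hle
    have htr0 : (0:ℝ) < t - r := by linarith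
    have hJ1 := jap_pos (t - r)
    have hJ2 := jap_pos (t + r)
    have hB : (0:ℝ) < jap (t - r) ^ (1 - s) := Real.rpow_pos_of_pos hJ1 _
    have hint : (∫ β in (t - r)..(t + r), jap β ^ (1 - pS))
        ≤ (2 * r) * jap (t - r) ^ (-s) := by
      rw [h1p]
      calc (∫ β in (t - r)..(t + r), jap β ^ (-s))
          ≤ ∫ _ in (t - r)..(t + r), jap (t - r) ^ (-s) := by
            apply intervalIntegral.integral_mono_on (by linarith)
              ((jap_rpow_cont (-s)).intervalIntegrable _ _) intervalIntegrable_const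
            intro x hx
            exact Real.rpow_le_rpow_of_nonpos hJ1 (jap_mono htr0.le hx.1) hsneg
        _ = (2 * r) * jap (t - r) ^ (-s) := by
            rw [intervalIntegral.integral_const, smul_eq_mul]; ring_nf
    have hsplit : jap (t - r) ^ (-s) = (jap (t - r))⁻¹ * jap (t - r) ^ (1 - s) := by
      rw [← Real.rpow_neg_one (jap (t - r)), ← Real.rpow_add hJ1]
      congr 1; ring
    have h3 : jap (t + r) ≤ 3 * jap (t - r) := by
      rw [jap, jap, show (3:ℝ) * Real.sqrt (1 + (t - r) ^ 2)
          = Real.sqrt (3 ^ 2 * (1 + (t - r) ^ 2)) by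
        rw [Real.sqrt_mul (by norm_num), Real.sqrt_sq (by norm_num)]]
      exact Real.sqrt_le_sqrt (by nlinarith)
    have h4 : 2 * (jap (t - r))⁻¹ ≤ 100 * (jap (t + r))⁻¹ := by
      rw [show (2:ℝ) * (jap (t - r))⁻¹ = 2 / jap (t - r) from (div_eq_mul_inv _ _).symm,
        show (100:ℝ) * (jap (t + r))⁻¹ = 100 / jap (t + r) from (div_eq_mul_inv _ _).symm,
        div_le_div_iff₀ hJ1 hJ2]
      nlinarith
    calc (1 / r) * ∫ β in (t - r)..(t + r), jap β ^ (1 - pS)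
        ≤ (1 / r) * ((2 * r) * jap (t - r) ^ (-s)) := by
          exact mul_le_mul_of_nonneg_left hint (by positivity)
      _ = 2 * jap (t - r) ^ (-s) := by field_simp
      _ = (2 * (jap (t - r))⁻¹) * jap (t - r) ^ (1 - s) := by rw [hsplit]; ring
      _ ≤ (100 * (jap (t + r))⁻¹) * jap (t - r) ^ (1 - s) :=
          mul_le_mul_of_nonneg_right h4 hB.le
      _ = 100 * (jap (t + r))⁻¹ * (jap (t - r)) ^ (2 - pS) := by rw [h2p]
  · -- Case t/2 ≤ r
    intro hge
    set a : ℝ := |t - r| with hadef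
    have ha0 : 0 ≤ a := abs_nonneg _
    have hab : a ≤ t + r := by
      rw [hadef, abs_le]; constructor <;> linarith
    have hJ2 := jap_pos (t + r)
    have hJa := jap_pos a
    have hBpos : (0:ℝ) < jap a ^ (1 - s) := Real.rpow_pos_of_pos hJa _
    -- ⟨a⟩^{1-s} ≥ 1/2 when a ≤ 1 (indeed ⟨a⟩ ≤ √2 ≤ 2 then)
    have hhalf : ∀ x : ℝ, 0 ≤ x → x ≤ 1 → (1:ℝ)/2 ≤ jap x ^ (1 - s) := by
      intro x hx0 hx1
      have h2 : jap x ≤ 2 := by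
        rw [jap, show (2:ℝ) = Real.sqrt 4 by
          rw [show (4:ℝ) = 2^2 by norm_num, Real.sqrt_sq (by norm_num)]]
        exact Real.sqrt_le_sqrt (by nlinarith)
      have := Real.rpow_le_rpow_of_nonpos (jap_pos x) h2 (by linarith : 1 - s ≤ 0)
      have h3 : (2:ℝ) ^ (-(1:ℝ)) ≤ (2:ℝ) ^ (1 - s) :=
        Real.rpow_le_rpow_of_exponent_le (by norm_num) (by linarith)
      rw [Real.rpow_neg_one] at h3
      norm_num at h3
      linarith
    -- main integral bound
    have hint : (∫ β in a..(t + r), jap β ^ (-s)) ≤ 7 * jap a ^ (1 - s) := by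
      rcases le_or_gt 1 a with h1a | h1a
      · -- a ≥ 1 : compare with β^{-s}
        have hapos : (0:ℝ) < a := by linarith
        have step1 : (∫ β in a..(t + r), jap β ^ (-s))
            ≤ ∫ β in a..(t + r), β ^ (-s) := by
          apply intervalIntegral.integral_mono_on hab
            ((jap_rpow_cont (-s)).intervalIntegrable _ _)
          · apply ContinuousOn.intervalIntegrable
            exact ContinuousOn.rpow_const continuousOn_id fun x hx => Or.inl
              (by rw [Set.uIcc_of_le hab] at hx
                  exact (lt_of_lt_of_le hapos hx.1).ne')
          · intro x hx
            have hx0 : 0 < x := lt_of_lt_of_le hapos hx.1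
            have hxj : x ≤ jap x := (le_abs_self x).trans (le_jap x)
            exact Real.rpow_le_rpow_of_nonpos hx0 hxj hsneg
        have step2 : (∫ β in a..(t + r), β ^ (-s))
            = ((t + r) ^ (-s + 1) - a ^ (-s + 1)) / (-s + 1) := by
          apply integral_rpow
          refine Or.inr ⟨fun h => ?_, Set.notMem_uIcc_of_lt hapos (by linarith)⟩
          have : s = 1 := neg_injective h
          linarith
        have hb1 : (0:ℝ) ≤ (t + r) ^ (-s + 1) := Real.rpow_nonneg (by linarith) _
        have step3 : ((t + r) ^ (-s + 1) - a ^ (-s + 1)) / (-s + 1)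
            ≤ (5/2) * a ^ (-s + 1) := by
          rw [div_le_iff_of_neg (by linarith : -s + 1 < 0)]
          have ha1 : (0:ℝ) ≤ a ^ (-s + 1) := Real.rpow_nonneg ha0 _
          nlinarith
        have step4 : a ^ (-s + 1) ≤ 2 * jap a ^ (1 - s) := by
          have hja : jap a ≤ Real.sqrt 2 * a := jap_le_sqrt_two_mul h1a
          have h5 : (Real.sqrt 2 * a) ^ (1 - s) ≤ jap a ^ (1 - s) :=
            Real.rpow_le_rpow_of_nonpos hJa hja (by linarith)
          rw [Real.mul_rpow hs0 ha0] at h5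
          have h6 : (Real.sqrt 2 : ℝ) ^ (-(1:ℝ)) ≤ (Real.sqrt 2) ^ (1 - s) :=
            Real.rpow_le_rpow_of_exponent_le (by linarith) (by linarith)
          rw [Real.rpow_neg_one] at h6
          have h7 : (1:ℝ)/2 ≤ (Real.sqrt 2)⁻¹ := by
            rw [le_inv_comm₀ (by norm_num) (by linarith)]; linarith
          have ha1 : (0:ℝ) ≤ a ^ (1 - s) := Real.rpow_nonneg ha0 _
          have : (1/2) * a ^ (1 - s) ≤ jap a ^ (1 - s) := by
            calc (1/2) * a ^ (1 - s) ≤ (Real.sqrt 2)⁻¹ * a ^ (1 - s) :=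
                  mul_le_mul_of_nonneg_right (by linarith) ha1
              _ ≤ (Real.sqrt 2) ^ (1 - s) * a ^ (1 - s) :=
                  mul_le_mul_of_nonneg_right (by linarith) ha1
              _ ≤ jap a ^ (1 - s) := h5
          rw [show -s + 1 = 1 - s by ring]
          linarith
        calc (∫ β in a..(t + r), jap β ^ (-s))
            ≤ ((t + r) ^ (-s + 1) - a ^ (-s + 1)) / (-s + 1) := step2 ▸ step1
          _ ≤ (5/2) * a ^ (-s + 1) := step3
          _ ≤ (5/2) * (2 * jap a ^ (1 - s)) :=
              mul_le_mul_of_nonneg_left step4 (by norm_num)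
          _ ≤ 7 * jap a ^ (1 - s) := by nlinarith
      · -- a < 1 : split at 1
        have hI1 : IntervalIntegrable (fun β : ℝ => jap β ^ (-s)) MeasureTheory.volume a 1 :=
          (jap_rpow_cont (-s)).intervalIntegrable _ _
        have hI2 : IntervalIntegrable (fun β : ℝ => jap β ^ (-s)) MeasureTheory.volume 1 (t + r) :=
          (jap_rpow_cont (-s)).intervalIntegrable _ _
        have hsum : (∫ β in a..1, jap β ^ (-s)) + (∫ β in (1:ℝ)..(t + r), jap β ^ (-s))
            = ∫ β in a..(t + r), jap β ^ (-s) :=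
          intervalIntegral.integral_add_adjacent_intervals hI1 hI2
        have hpart1 : (∫ β in a..(1:ℝ), jap β ^ (-s)) ≤ 1 := by
          calc (∫ β in a..(1:ℝ), jap β ^ (-s)) ≤ ∫ _ in a..(1:ℝ), (1:ℝ) := by
                apply intervalIntegral.integral_mono_on h1a.le hI1 intervalIntegrable_const
                intro x _
                exact Real.rpow_le_one_of_one_le_of_nonpos (one_le_jap x) hsneg
            _ = 1 - a := by rw [intervalIntegral.integral_const, smul_eq_mul]; ring
            _ ≤ 1 := by linarith
        have hpart2 : (∫ β in (1:ℝ)..(t + r), jap β ^ (-s)) ≤ 5/2 := by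
          have step1 : (∫ β in (1:ℝ)..(t + r), jap β ^ (-s))
              ≤ ∫ β in (1:ℝ)..(t + r), β ^ (-s) := by
            apply intervalIntegral.integral_mono_on htr
              ((jap_rpow_cont (-s)).intervalIntegrable _ _)
            · apply ContinuousOn.intervalIntegrable
              exact ContinuousOn.rpow_const continuousOn_id fun x hx => Or.inl
                (by rw [Set.uIcc_of_le htr] at hx
                    exact (lt_of_lt_of_le one_pos hx.1).ne')
            · intro x hx
              have hx0 : (0:ℝ) < x := lt_of_lt_of_le one_pos hx.1
              have hxj : x ≤ jap x := (le_abs_self x).trans (le_jap x)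
              exact Real.rpow_le_rpow_of_nonpos hx0 hxj hsneg
          have step2 : (∫ β in (1:ℝ)..(t + r), β ^ (-s))
              = ((t + r) ^ (-s + 1) - 1 ^ (-s + 1)) / (-s + 1) := by
            refine integral_rpow (Or.inr ⟨fun h => ?_,
              Set.notMem_uIcc_of_lt one_pos (by linarith)⟩)
            have : s = 1 := neg_injective h
            linarith
          have hb1 : (0:ℝ) ≤ (t + r) ^ (-s + 1) := Real.rpow_nonneg (by linarith) _
          have step3 : ((t + r) ^ (-s + 1) - 1 ^ (-s + 1)) / (-s + 1) ≤ 5/2 := by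
            rw [Real.one_rpow, div_le_iff_of_neg (by linarith : -s + 1 < 0)]
            linarith
          rw [step2] at step1
          linarith
        have hge2 : (1:ℝ)/2 ≤ jap a ^ (1 - s) := hhalf a ha0 h1a.le
        linarith [hsum, hpart1, hpart2, hge2]
    -- finish case 2
    have hja_eq : jap a = jap (t - r) := jap_abs (t - r)
    have hfin : 7 / r ≤ 100 * (jap (t + r))⁻¹ := by
      have hjb : jap (t + r) ≤ Real.sqrt 2 * (t + r) := jap_le_sqrt_two_mul htr
      have htr3 : t + r ≤ 3 * r := by linarith
      rw [show (100:ℝ) * (jap (t + r))⁻¹ = 100 / jap (t + r) from (div_eq_mul_inv _ _).symm,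
        div_le_div_iff₀ hr hJ2]
      nlinarith
    calc (1 / r) * ∫ β in a..(t + r), jap β ^ (1 - pS)
        ≤ (1 / r) * (7 * jap a ^ (1 - s)) := by
          apply mul_le_mul_of_nonneg_left _ (by positivity)
          simpa only [h1p] using hint
      _ = (7 / r) * jap a ^ (1 - s) := by ring
      _ ≤ (100 * (jap (t + r))⁻¹) * jap a ^ (1 - s) :=
          mul_le_mul_of_nonneg_right hfin hBpos.le
      _ = 100 * (jap (t + r))⁻¹ * (jap (t - r)) ^ (2 - pS) := by
          rw [h2p, hja_eq]
end

section
/- Let $u_1:[0,\infty)\to[0,\infty)$ be continuous, not identically zero, supported in $[0,1]$. Then there exist $r_0 \in (0,1)$ and $C \in (0,1)$ such that for all $t, r \ge 0$ with $t + r > 1$ and $0 < t - r < r_0$, the spherical mean expression $\frac{1}{2r}\int_{t-r}^{t+r} u_1(\lambda)\lambda\,d\lambda \ge C (t+r)^{-1}$. -/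
/-!
Since `u₁` is continuous, nonnegative and supported in `[0,1]`, it is positive at some
`y ∈ (0,1)`, so `I = ∫_{y/2}^1 u₁(λ) λ dλ > 0`. For `t - r < y/2` and `t + r > 1` the
interval `[t-r, t+r]` contains `[y/2, 1]`, and `t - r > 0` gives `2r ≤ t + r`; hence the mean
is at least `I (t+r)⁻¹`, and `C = min I (1/2)` works.
-/

open Set MeasureTheory intervalIntegral

lemma exists_mem_pos_of_mem_closure {X : Type*} [TopologicalSpace X] {u : X → ℝ}
    (hu : Continuous u) {s : Set X} {x : X} (hx : x ∈ closure s) (hpos : 0 < u x) :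
    ∃ y ∈ s, 0 < u y :=
  ((mem_closure_iff_frequently.mp hx).and_eventually
    (hu.continuousAt.eventually (lt_mem_nhds hpos))).exists

lemma integral_mul_inv_le_mean {f : ℝ → ℝ} (hf : Continuous f)
    (hnonneg : ∀ l, 0 < l → 0 ≤ f l)
    {a b t r : ℝ} (hab : a < b) (ha : t - r ≤ a) (hb : b ≤ t + r) (hpos : 0 < t - r) :
    (∫ l in a..b, f l) * (t + r)⁻¹ ≤ 1 / (2 * r) * ∫ l in (t - r)..(t + r), f l := by
  have hr : 0 < 2 * r := by linarith
  have hI : 0 ≤ ∫ l in a..b, f l :=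
    integral_nonneg hab.le fun l hl => hnonneg l (by linarith [hl.1])
  have hsub : ∫ l in a..b, f l ≤ ∫ l in (t - r)..(t + r), f l :=
    integral_mono_interval ha hab.le hb
      ((ae_restrict_iff' measurableSet_Ioc).mpr
        (ae_of_all _ fun l hl => hnonneg l (hpos.trans hl.1)))
      (hf.intervalIntegrable _ _)
  calc (∫ l in a..b, f l) * (t + r)⁻¹
      ≤ (∫ l in a..b, f l) * (2 * r)⁻¹ := by gcongr; linarith
    _ ≤ (∫ l in (t - r)..(t + r), f l) * (2 * r)⁻¹ := by gcongr
    _ = 1 / (2 * r) * ∫ l in (t - r)..(t + r), f l := by rw [one_div, mul_comm]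

/-- Initial lower bound for the free wave: if `u₁ : [0,∞) → [0,∞)` is continuous,
not identically zero, and supported in `[0,1]`, then there are `r₀ ∈ (0,1)` and
`C ∈ (0,1)` such that for all `t, r ≥ 0` with `t + r > 1` and `0 < t - r < r₀`,
`(1/(2r)) ∫_{t-r}^{t+r} u₁(λ) λ dλ ≥ C (t+r)⁻¹`. -/
theorem free_wave_initial_lower_bound (u₁ : ℝ → ℝ)
    (hcont : Continuous u₁) (hnonneg : ∀ x, 0 ≤ u₁ x)
    (hne : ∃ x, u₁ x ≠ 0)
    (hsupp : ∀ x, x ∉ Set.Icc (0 : ℝ) 1 → u₁ x = 0) :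
    ∃ r₀ ∈ Set.Ioo (0 : ℝ) 1, ∃ C ∈ Set.Ioo (0 : ℝ) 1,
      ∀ t r : ℝ, 0 ≤ t → 0 ≤ r → 1 < t + r → 0 < t - r → t - r < r₀ →
        C * (t + r)⁻¹ ≤ (1 / (2 * r)) * ∫ l in (t - r)..(t + r), u₁ l * l := by
  obtain ⟨x₀, hx₀⟩ := hne
  have hx₀_mem : x₀ ∈ closure (Ioo (0 : ℝ) 1) := by
    rw [closure_Ioo zero_ne_one]
    by_contra h
    exact hx₀ (hsupp x₀ h)
  obtain ⟨y, ⟨hy0, hy1⟩, hy⟩ :=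
    exists_mem_pos_of_mem_closure hcont hx₀_mem ((hnonneg x₀).lt_of_ne' hx₀)
  have hf : Continuous fun l => u₁ l * l := hcont.mul continuous_id
  have hf_nonneg : ∀ l, 0 ≤ l → 0 ≤ u₁ l * l := fun l hl => mul_nonneg (hnonneg l) hl
  set I := ∫ l in (y / 2)..1, u₁ l * l
  have hI : 0 < I :=
    integral_pos (by linarith) hf.continuousOn (fun l hl => hf_nonneg l (by linarith [hl.1]))
      ⟨y, ⟨by linarith, hy1.le⟩, mul_pos hy hy0⟩
  refine ⟨y / 2, ⟨by linarith, by linarith⟩, min I (1 / 2),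
    ⟨lt_min hI one_half_pos, (min_le_right _ _).trans_lt one_half_lt_one⟩, ?_⟩
  intro t r _ _ h1 hpos hr₀
  calc min I (1 / 2) * (t + r)⁻¹ ≤ I * (t + r)⁻¹ := by gcongr; exact min_le_left _ _
    _ ≤ _ := integral_mul_inv_le_mean hf (fun l hl => hf_nonneg l hl.le) (by linarith)
      hr₀.le h1.le hpos
end
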